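/- Let B be a general differentiation basis on T^ω satisfying condition (M). If lim_{k→∞} δ_k^B = δ₀ for some δ₀ > 0, then B does not differentiate L¹(T^ω): there exist f ∈ L¹(T^ω) and a set of strictly positive Haar measure of points g such that for each such g some sequence S_n ⇒ g satisfies f_{S_n} ↛ f(g). -/

import Mathlib

/-!
Fix `0 < c < δ₀`. For all large `k` we have `δ_k > c`, so for each `j` there are a measurable
`E_j` with `m(E_j) > c` and `f_j`, `λ_j` with `M f_j > λ_j` on `E_j` and
`‖f_j‖₁ < 2^{-(K+j)} λ_j`. The series `f = ∑ⱼ |f_j| / λ_j` is integrable with `‖f‖₁ ≤ 2^{1-K}`,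
and every basis set `B` with `|(f_j)_B| > λ_j` has `m(B) < 2^{-(K+j)}` and `f_B > 1`.
Since `m(limsup E_j) ≥ c` while `{f ≥ 1}` together with the exceptional set of (M) has measure
`< c`, a set of positive measure of points `g` lies in infinitely many `E_j` and has `f(g) < 1`.
At such a `g` there are basis sets of arbitrarily small measure, hence by (M) of diameter tending
to `0`, on which `f` averages more than `1 > f(g)`.
-/

open MeasureTheory Filter Topology Set
open scoped ENNReal

noncomputable section

/-- The one-dimensional torus `𝕋 = ℝ/ℤ`. -/
abbrev 𝕋 : Type := AddCircle (1 : ℝ)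

/-- The infinite-dimensional torus `𝕋^ω`. -/
abbrev Tω : Type := ℕ → 𝕋

/-- The normalized Haar measure `m` on `𝕋^ω` (which coincides with the countable
product of the Lebesgue probability measures on the factors). -/
def haarTω : Measure Tω := Measure.addHaarMeasure ⊤

/-- The metric `ρ(g,h) = ∑ₙ 2⁻ⁿ · min(|gₙ−hₙ|, 1−|gₙ−hₙ|)`; the norm on `AddCircle 1`
is exactly `min(|·|, 1−|·|)` of a representative. Coordinates are indexed from `0`. -/
def rho (g h : Tω) : ℝ := ∑' n : ℕ, (1 / 2 : ℝ) ^ (n + 1) * ‖g n - h n‖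

/-- The diameter of a set with respect to `ρ`. -/
def diam (E : Set Tω) : ℝ := sSup (Set.image2 rho E E)

/-- The average `f_E = m(E)⁻¹ ∫_E f dm`. -/
def avg (f : Tω → ℝ) (E : Set Tω) : ℝ := ⨍ x in E, f x ∂haarTω

/-- `B(g) = {B ∈ 𝓑 : g ∈ closure B}` (non-centered basis associated to a collection). -/
def basisOf (𝓑 : Set (Set Tω)) (g : Tω) : Set (Set Tω) := {B ∈ 𝓑 | g ∈ closure B}

/-- `M_B f (g) > lam`, i.e. `sup_{B ∈ bas g} |f_B| > lam`. -/
def maximalGT (bas : Tω → Set (Set Tω)) (f : Tω → ℝ) (g : Tω) (lam : ℝ) : Prop :=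
  ∃ B ∈ bas g, lam < |avg f B|

/-- `M_{B,r₀} f (g) > lam` for the truncated maximal operator. -/
def maximalTruncGT (bas : Tω → Set (Set Tω)) (r₀ : ℝ) (f : Tω → ℝ) (g : Tω) (lam : ℝ) :
    Prop :=
  ∃ B ∈ bas g, diam B < r₀ ∧ lam < |avg f B|

/-- A sequence `S` contracts to `g` (written `Sₙ ⇒ g`). -/
def ContractsTo (bas : Tω → Set (Set Tω)) (S : ℕ → Set Tω) (g : Tω) : Prop :=
  (∀ n, S n ∈ bas g) ∧ Tendsto (fun n => diam (S n)) atTop (𝓝 0)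

/-- A general differentiation basis: each `B ∈ bas g` is measurable, of strictly positive
measure, with `g` in its closure, and each `g` admits a contracting sequence. -/
def IsGeneralBasis (bas : Tω → Set (Set Tω)) : Prop :=
  (∀ g, ∀ B ∈ bas g, MeasurableSet B ∧ 0 < haarTω B ∧ g ∈ closure B) ∧
  (∀ g, ∃ S : ℕ → Set Tω, ContractsTo bas S g)

/-- `bas` differentiates `L¹(𝕋^ω)`. -/
def DifferentiatesL1 (bas : Tω → Set (Set Tω)) : Prop :=
  ∀ f : Tω → ℝ, Integrable f haarTω →
    ∀ᵐ g ∂haarTω, ∀ S : ℕ → Set Tω, ContractsTo bas S g →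
      Tendsto (fun n => avg f (S n)) atTop (𝓝 (f g))

/-- The maximal operator of `bas` is of weak type (1,1). -/
def WeakType11 (bas : Tω → Set (Set Tω)) : Prop :=
  ∃ C : ℝ, 0 < C ∧ ∀ f : Tω → ℝ, Integrable f haarTω → ∀ lam : ℝ, 0 < lam →
    lam * (haarTω {g | maximalGT bas f g lam}).toReal ≤ C * ∫ x, |f x| ∂haarTω

/-- An interval of `𝕋`: the image under the quotient map `ℝ → ℝ/ℤ` of an interval
of `ℝ` of length at most 1. -/
def IsArc (S : Set 𝕋) : Prop :=
  ∃ J : Set ℝ, J.OrdConnected ∧ (∃ a : ℝ, J ⊆ Set.Icc a (a + 1)) ∧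
    S = (fun x : ℝ => (x : 𝕋)) '' J

/-- An interval of `𝕋^ω`: a product of intervals of `𝕋`, all but finitely many
of which are the whole `𝕋`. -/
def IsBox (I : Set Tω) : Prop :=
  ∃ (s : Finset ℕ) (F : ℕ → Set 𝕋), (∀ n, IsArc (F n)) ∧ (∀ n ∉ s, F n = Set.univ) ∧
    I = Set.pi Set.univ F

/-- Conditions (B1)–(B3) for a collection of subsets of `𝕋^ω` of strictly positive
measure: (B1) every element is an interval; (B2) translation invariance;
(B3) elements of arbitrarily small diameter. -/
def SatisfiesB (𝓑 : Set (Set Tω)) : Prop :=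
  (∀ B ∈ 𝓑, 0 < haarTω B) ∧
  (∀ B ∈ 𝓑, IsBox B) ∧
  (∀ B ∈ 𝓑, ∀ g : Tω, (fun x => g + x) '' B ∈ 𝓑) ∧
  (∀ ε : ℝ, 0 < ε → ∃ B ∈ 𝓑, diam B < ε)

/-- The image in `𝕋` of the real interval `(0, l)`. -/
def arc (l : ℝ) : Set 𝕋 := (fun x : ℝ => (x : 𝕋)) '' Set.Ioo 0 l

/-- For `n = m² + r` with `m = ⌊√n⌋`, `0 ≤ r ≤ 2m`, this encodes the side of the
`i`-th coordinate (0-indexed) of `V_n`: `some k` means the side `(0, 2⁻ᵏ)`, and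
`none` means the whole `𝕋`. -/
def sideLen (n i : ℕ) : Option ℕ :=
  let m := Nat.sqrt n
  let r := n - m * m
  if r = 0 then (if i < m then some m else none)
  else if r ≤ m then (if i < m then some m else if i = m then some r else none)
  else (if i < r - m then some (m + 1) else if i < m + 1 then some m else none)

/-- The open interval `V_n ⊆ 𝕋^ω`. -/
def Vcell (n : ℕ) : Set Tω :=
  Set.pi Set.univ fun i => match sideLen n i with
    | some k => arc ((2 : ℝ)⁻¹ ^ k)
    | none => Set.univ

/-- The Rubio de Francia basis `R = {g + Vₙ : n ≥ 1, g ∈ 𝕋^ω}`. -/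
def RdF : Set (Set Tω) := {S | ∃ n : ℕ, 1 ≤ n ∧ ∃ g : Tω, S = (fun x => g + x) '' Vcell n}

/-- `δ_k^B = sup{ m(E) : E measurable, ∃ f ∈ L¹, λ > 0, M_B f > λ on E and
λ·m(E) > 2^k·‖f‖₁ }` (with `sup ∅ = 0`). -/
def deltaK (bas : Tω → Set (Set Tω)) (k : ℕ) : ℝ≥0∞ :=
  sSup {v : ℝ≥0∞ | ∃ E : Set Tω, MeasurableSet E ∧ v = haarTω E ∧
    ∃ f : Tω → ℝ, Integrable f haarTω ∧ ∃ lam : ℝ, 0 < lam ∧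
      (∀ g ∈ E, maximalGT bas f g lam) ∧
      ENNReal.ofReal ((2 : ℝ) ^ k * ∫ x, |f x| ∂haarTω) < ENNReal.ofReal lam * haarTω E}

/-- `δ̃_k^B`: as `δ_k^B`, with `M_B` replaced by the truncated operator `M_{B,α_k}`. -/
def deltaTildeK (bas : Tω → Set (Set Tω)) (α : ℕ → ℝ) (k : ℕ) : ℝ≥0∞ :=
  sSup {v : ℝ≥0∞ | ∃ E : Set Tω, MeasurableSet E ∧ v = haarTω E ∧
    ∃ f : Tω → ℝ, Integrable f haarTω ∧ ∃ lam : ℝ, 0 < lam ∧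
      (∀ g ∈ E, maximalTruncGT bas (α k) f g lam) ∧
      ENNReal.ofReal ((2 : ℝ) ^ k * ∫ x, |f x| ∂haarTω) < ENNReal.ofReal lam * haarTω E}

/-- Condition (M). -/
def CondM (bas : Tω → Set (Set Tω)) : Prop :=
  ∃ F : Set Tω, haarTω Fᶜ = 0 ∧ ∀ g ∈ F, ∀ ε : ℝ, 0 < ε → ∃ δ : ℝ, 0 < δ ∧
    ∀ E ∈ bas g, haarTω E < ENNReal.ofReal δ → diam E < ε

instance : Fact ((0 : ℝ) < 1) := ⟨one_pos⟩

/-- The canonical representative in `[0,1)` of a point of `𝕋`. -/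
def rep (x : 𝕋) : ℝ := ((AddCircle.equivIco 1 0 x : Set.Ico (0 : ℝ) (0 + 1)) : ℝ)

/-- The cylinder set over the coordinates `K+1, …, K+(L+1)²` (paper numbering, i.e.
0-indexed coordinates `K, …, K+(L+1)²-1`) determined by `S ⊆ [0,1)^{(L+1)²}`. -/
def cylinder (K L : ℕ) (S : Set (Fin ((L + 1) ^ 2) → ℝ)) : Set Tω :=
  {g | (fun j : Fin ((L + 1) ^ 2) => rep (g (K + (j : ℕ)))) ∈ S}

/-- `U_n = (0,2⁻ⁿ)ⁿ × ∏_{i>n} 𝕋`. -/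
def Ucell (n : ℕ) : Set Tω :=
  Set.pi Set.univ fun i => if i < n then arc ((2 : ℝ)⁻¹ ^ n) else Set.univ

/-- `e_{n,i}`: the element whose `i`-th coordinate (0-indexed) is `2⁻ⁿ`, others `0`. -/
def evec (n i : ℕ) : Tω := fun j => if j = i then (((2 : ℝ)⁻¹ ^ n : ℝ) : 𝕋) else 0

/-- `U_{n,i} = U_n ∪ (e_{n,i} + U_n)`. -/
def Uni (n i : ℕ) : Set Tω := Ucell n ∪ ((fun x => evec n i + x) '' Ucell n)

/-- The collection `D₀ = {U_{n,i} : n ≥ 1, 1 ≤ i ≤ n}` (0-indexed: `i < n`). -/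
def D0 : Set (Set Tω) := {S | ∃ n : ℕ, 1 ≤ n ∧ ∃ i : ℕ, i < n ∧ S = Uni n i}

/-- The open box `∏ᵢ (0, αᵢ) ⊆ ℝ^{n²}`. -/
def box (n : ℕ) (α : Fin (n ^ 2) → ℝ) : Set (Fin (n ^ 2) → ℝ) :=
  Set.pi Set.univ fun i => Set.Ioo 0 (α i)

/-- The dilated box `(1+1/n)·∏ᵢ (0, αᵢ)`. -/
def bigBox (n : ℕ) (α : Fin (n ^ 2) → ℝ) : Set (Fin (n ^ 2) → ℝ) :=
  Set.pi Set.univ fun i => Set.Ioo 0 ((1 + 1 / (n : ℝ)) * α i)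

open Classical in
/-- The set `J` of points of the dilated box having at least `4n` coordinates `xᵢ` with
`xᵢ ∈ [αᵢ, (1+1/n)αᵢ)`. -/
def Jset (n : ℕ) (α : Fin (n ^ 2) → ℝ) : Set (Fin (n ^ 2) → ℝ) :=
  {x ∈ bigBox n α |
    4 * n ≤ (Finset.univ.filter fun i => x i ∈ Set.Ico (α i) ((1 + 1 / (n : ℝ)) * α i)).card}

end

section Averages

variable {α : Type*} [MeasurableSpace α] {μ : Measure α} {s : Set α} {f : α → ℝ}

theorem measureReal_pos_of_setAverage_ne_zero (h : ⨍ x in s, f x ∂μ ≠ 0) : 0 < μ.real s := by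
  refine measureReal_nonneg.lt_of_ne fun h0 => h ?_
  rw [setAverage_eq, ← h0, inv_zero, zero_smul]

theorem lt_setAverage_iff {a : ℝ} (hs : 0 < μ.real s) :
    a < ⨍ x in s, f x ∂μ ↔ μ.real s * a < ∫ x in s, f x ∂μ := by
  rw [setAverage_eq, smul_eq_mul, lt_inv_mul_iff₀ hs]

theorem mul_measureReal_lt_setIntegral_abs {a : ℝ} (ha : 0 ≤ a) (h : a < |⨍ x in s, f x ∂μ|) :
    a * μ.real s < ∫ x in s, |f x| ∂μ := by
  have hs : 0 < μ.real s :=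
    measureReal_pos_of_setAverage_ne_zero (abs_pos.1 (ha.trans_lt h))
  have h_abs : |⨍ x in s, f x ∂μ| ≤ (μ.real s)⁻¹ * ∫ x in s, |f x| ∂μ := by
    rw [setAverage_eq, smul_eq_mul, abs_mul, abs_of_pos (inv_pos.2 hs)]
    exact mul_le_mul_of_nonneg_left abs_integral_le_integral_abs (inv_pos.2 hs).le
  rw [mul_comm, ← lt_inv_mul_iff₀ hs]
  exact h.trans_le h_abs

end Averages

section Series

variable {α : Type*} [MeasurableSpace α] {μ : Measure α}

theorem exists_integrable_ae_le_of_summable_integral {u : ℕ → α → ℝ}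
    (hu : ∀ j, Integrable (u j) μ) (hu0 : ∀ j, 0 ≤ u j)
    (hsum : Summable fun j => ∫ x, u j x ∂μ) :
    ∃ F : α → ℝ, Integrable F μ ∧ 0 ≤ F ∧ (∀ j, u j ≤ᵐ[μ] F) ∧
      ∫ x, F x ∂μ = ∑' j, ∫ x, u j x ∂μ := by
  set G : α → ℝ≥0∞ := fun x => ∑' j, ENNReal.ofReal (u j x)
  have hmeas : ∀ j, AEMeasurable (fun x => ENNReal.ofReal (u j x)) μ :=
    fun j => (hu j).aemeasurable.ennreal_ofReal
  have hG : AEMeasurable G μ := AEMeasurable.tsum hmeas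
  have hG_lintegral : ∫⁻ x, G x ∂μ = ENNReal.ofReal (∑' j, ∫ x, u j x ∂μ) := by
    rw [lintegral_tsum hmeas, ENNReal.ofReal_tsum_of_nonneg
      (fun j => integral_nonneg (hu0 j)) hsum]
    exact tsum_congr fun j =>
      (ofReal_integral_eq_lintegral_ofReal (hu j) (ae_of_all _ (hu0 j))).symm
  have hG_fin : ∫⁻ x, G x ∂μ ≠ ∞ := hG_lintegral ▸ ENNReal.ofReal_ne_top
  have hG_ae : ∀ᵐ x ∂μ, G x < ∞ := ae_lt_top' hG hG_fin
  refine ⟨fun x => (G x).toReal, integrable_toReal_of_lintegral_ne_top hG hG_fin,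
    fun x => ENNReal.toReal_nonneg, fun j => ?_, ?_⟩
  · filter_upwards [hG_ae] with x hx
    calc u j x = (ENNReal.ofReal (u j x)).toReal := (ENNReal.toReal_ofReal (hu0 j x)).symm
      _ ≤ (G x).toReal := ENNReal.toReal_mono hx.ne (ENNReal.le_tsum j)
  · rw [integral_toReal hG hG_ae, hG_lintegral,
      ENNReal.toReal_ofReal (tsum_nonneg fun j => integral_nonneg (hu0 j))]

theorem ofReal_mul_measure_le_ofReal_integral [IsFiniteMeasure μ] {f : α → ℝ}
    (hf0 : 0 ≤ᵐ[μ] f) (hf : Integrable f μ) {ε : ℝ} (hε : 0 ≤ ε) :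
    ENNReal.ofReal ε * μ {x | ε ≤ f x} ≤ ENNReal.ofReal (∫ x, f x ∂μ) := by
  rw [← ofReal_measureReal, ← ENNReal.ofReal_mul hε]
  exact ENNReal.ofReal_le_ofReal (mul_meas_ge_le_integral_of_nonneg hf0 hf ε)

end Series

theorem le_measure_limsup_atTop {α : Type*} [MeasurableSpace α] {μ : Measure α}
    [IsFiniteMeasure μ] {s : ℕ → Set α} {c : ℝ≥0∞} (hs : ∀ j, MeasurableSet (s j))
    (hc : ∀ j, c ≤ μ (s j)) : c ≤ μ (limsup s atTop) := by
  have h_anti : Antitone fun n => ⋃ i ≥ n, s i :=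
    fun m n hmn => biUnion_mono (fun i (hi : n ≤ i) => hmn.trans hi) fun _ _ => le_rfl
  rw [limsup_eq_iInf_iSup_of_nat]
  simp only [iInf_eq_iInter, iSup_eq_iUnion]
  rw [h_anti.measure_iInter
    (fun n => (MeasurableSet.biUnion (to_countable _) fun i _ => hs i).nullMeasurableSet)
    ⟨0, measure_ne_top _ _⟩]
  exact le_iInf fun n => (hc n).trans (measure_mono (subset_biUnion_of_mem (u := s) (le_refl n)))

instance : IsProbabilityMeasure haarTω := by
  have h := Measure.addHaarMeasure_self (K₀ := (⊤ : TopologicalSpace.PositiveCompacts Tω))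
  exact ⟨by simpa [haarTω] using h⟩

theorem diam_nonneg (E : Set Tω) : 0 ≤ diam E :=
  Real.sSup_nonneg <| by
    rintro _ ⟨g, -, h, -, rfl⟩
    exact tsum_nonneg fun n => mul_nonneg (by positivity) (norm_nonneg _)

section Basis

variable {bas : Tω → Set (Set Tω)}

theorem exists_of_lt_deltaK {c : ℝ≥0∞} {k : ℕ} (h : c < deltaK bas k) :
    ∃ E : Set Tω, MeasurableSet E ∧ c < haarTω E ∧
      ∃ f : Tω → ℝ, Integrable f haarTω ∧ ∃ lam : ℝ, 0 < lam ∧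
        (∀ g ∈ E, maximalGT bas f g lam) ∧ 2 ^ k * ∫ x, |f x| ∂haarTω < lam := by
  obtain ⟨_, ⟨E, hE, rfl, f, hf, lam, hlam, hmax, hweak⟩, hcE⟩ := lt_sSup_iff.1 h
  refine ⟨E, hE, hcE, f, hf, lam, hlam, hmax, (ENNReal.ofReal_lt_ofReal_iff hlam).1 ?_⟩
  calc ENNReal.ofReal (2 ^ k * ∫ x, |f x| ∂haarTω) < ENNReal.ofReal lam * haarTω E := hweak
    _ ≤ ENNReal.ofReal lam := mul_le_of_le_one_right' prob_le_one

theorem exists_integrable_one_lt_avg_of_lt_deltaK {c : ℝ≥0∞} {K : ℕ}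
    (hc : ∀ j, c < deltaK bas (j + K)) :
    ∃ f : Tω → ℝ, Integrable f haarTω ∧ 0 ≤ f ∧ ∫ x, f x ∂haarTω ≤ 2 * (1 / 2) ^ K ∧
      ∃ E : ℕ → Set Tω, (∀ j, MeasurableSet (E j)) ∧ (∀ j, c < haarTω (E j)) ∧
        ∀ j, ∀ g ∈ E j, ∃ B ∈ bas g, haarTω.real B < (1 / 2) ^ (j + K) ∧ 1 < avg f B := by
  choose E hE hcE f hf lam hlam hmax hweak using fun j => exists_of_lt_deltaK (hc j)
  set u : ℕ → Tω → ℝ := fun j x => (lam j)⁻¹ * |f j x|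
  have hu : ∀ j, Integrable (u j) haarTω := fun j => (hf j).abs.const_mul _
  have hu0 : ∀ j, 0 ≤ u j := fun j x => mul_nonneg (inv_nonneg.2 (hlam j).le) (abs_nonneg _)
  have hf_small : ∀ j, ∫ x, |f j x| ∂haarTω < lam j * (1 / 2) ^ (j + K) := fun j => by
    rw [one_div, inv_pow, ← div_eq_mul_inv, lt_div_iff₀ (by positivity), mul_comm]
    exact hweak j
  have hu_small : ∀ j, ∫ x, u j x ∂haarTω < (1 / 2) ^ (j + K) := fun j => by
    rw [integral_const_mul, inv_mul_lt_iff₀ (hlam j)]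
    exact hf_small j
  have hgeom : HasSum (fun j => (1 / 2 : ℝ) ^ (j + K)) (2 * (1 / 2) ^ K) := by
    simpa [pow_add] using hasSum_geometric_two.mul_right ((1 / 2 : ℝ) ^ K)
  have hu_summable : Summable fun j => ∫ x, u j x ∂haarTω :=
    hgeom.summable.of_nonneg_of_le (fun j => integral_nonneg (hu0 j)) fun j => (hu_small j).le
  obtain ⟨F, hF, hF0, huF, hF_int⟩ :=
    exists_integrable_ae_le_of_summable_integral hu hu0 hu_summable
  refine ⟨F, hF, hF0, ?_, E, hE, hcE, fun j g hg => ?_⟩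
  · rw [hF_int, ← hgeom.tsum_eq]
    exact hu_summable.tsum_le_tsum (fun j => (hu_small j).le) hgeom.summable
  obtain ⟨B, hB, hlamB⟩ := hmax j g hg
  have hlarge := mul_measureReal_lt_setIntegral_abs (hlam j).le hlamB
  have hB_pos : 0 < haarTω.real B :=
    measureReal_pos_of_setAverage_ne_zero (abs_pos.1 ((hlam j).trans hlamB))
  refine ⟨B, hB, ?_, (lt_setAverage_iff hB_pos).2 ?_⟩
  · refine lt_of_mul_lt_mul_left ?_ (hlam j).le
    calc lam j * haarTω.real B < ∫ x in B, |f j x| ∂haarTω := hlarge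
      _ ≤ ∫ x, |f j x| ∂haarTω :=
          setIntegral_le_integral (hf j).abs (ae_of_all _ fun x => abs_nonneg _)
      _ < lam j * (1 / 2) ^ (j + K) := hf_small j
  · calc haarTω.real B * 1 < ∫ x in B, u j x ∂haarTω := by
          rw [integral_const_mul, mul_one, lt_inv_mul_iff₀ (hlam j)]
          exact hlarge
      _ ≤ ∫ x in B, F x ∂haarTω :=
          integral_mono_ae (hu j).integrableOn hF.integrableOn (ae_restrict_of_ae (huF j))

theorem exists_mem_measureReal_lt_of_frequently {E : ℕ → Set Tω} {r : ℕ → ℝ} {g : Tω}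
    {P : Set Tω → Prop} (hr : Tendsto r atTop (𝓝 0)) (hg : ∃ᶠ j in atTop, g ∈ E j)
    (hE : ∀ j, g ∈ E j → ∃ B ∈ bas g, haarTω.real B < r j ∧ P B) (δ : ℝ) (hδ : 0 < δ) :
    ∃ B ∈ bas g, haarTω.real B < δ ∧ P B := by
  obtain ⟨j, hgj, hrj⟩ := (hg.and_eventually (hr.eventually (gt_mem_nhds hδ))).exists
  obtain ⟨B, hB, hBr, hPB⟩ := hE j hgj
  exact ⟨B, hB, hBr.trans hrj, hPB⟩

theorem exists_contractsTo_of_forall_measureReal_lt {g : Tω} {P : Set Tω → Prop}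
    (hg : ∀ ε : ℝ, 0 < ε → ∃ δ : ℝ, 0 < δ ∧
      ∀ E ∈ bas g, haarTω E < ENNReal.ofReal δ → diam E < ε)
    (hP : ∀ δ : ℝ, 0 < δ → ∃ B ∈ bas g, haarTω.real B < δ ∧ P B) :
    ∃ S : ℕ → Set Tω, ContractsTo bas S g ∧ ∀ n, P (S n) := by
  choose S hS hS_small hSP using fun n : ℕ => hP (1 / (n + 1)) Nat.one_div_pos_of_nat
  refine ⟨S, ⟨hS, Metric.tendsto_atTop.2 fun ε hε => ?_⟩, hSP⟩
  obtain ⟨δ, hδ, hdiam⟩ := hg ε hε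
  obtain ⟨N, hN⟩ := exists_nat_one_div_lt hδ
  refine ⟨N, fun n hn => ?_⟩
  rw [Real.dist_eq, sub_zero, abs_of_nonneg (diam_nonneg _)]
  refine hdiam _ (hS n) ((ENNReal.lt_ofReal_iff_toReal_lt (measure_ne_top _ _)).2 ?_)
  calc haarTω.real (S n) < 1 / (n + 1) := hS_small n
    _ ≤ 1 / (N + 1) := Nat.one_div_le_one_div hn
    _ < δ := hN

end Basis

theorem not_differentiatesL1_of_deltaK_tendsto_pos_general (bas : Tω → Set (Set Tω))
    (hM : CondM bas) (δ₀ : ℝ≥0∞) (hδ₀ : 0 < δ₀)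
    (h : Tendsto (deltaK bas) atTop (𝓝 δ₀)) :
    ∃ f : Tω → ℝ, Integrable f haarTω ∧ ∃ E : Set Tω, 0 < haarTω E ∧
      ∀ g ∈ E, ∃ S : ℕ → Set Tω, ContractsTo bas S g ∧
        ¬ Tendsto (fun n => avg f (S n)) atTop (𝓝 (f g)) := by
  obtain ⟨Fm, hFm_null, hFm⟩ := hM
  obtain ⟨c, hc0, hcδ⟩ := exists_between hδ₀
  have hc : 0 < c.toReal := ENNReal.toReal_pos hc0.ne' hcδ.ne_top
  have hgeom : Tendsto (fun k : ℕ => (1 / 2 : ℝ) ^ k) atTop (𝓝 0) :=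
    tendsto_pow_atTop_nhds_zero_of_lt_one (by norm_num) one_half_lt_one
  obtain ⟨K, hK⟩ := eventually_atTop.1 <|
    (h.eventually (eventually_gt_nhds hcδ)).and (hgeom.eventually (gt_mem_nhds (half_pos hc)))
  obtain ⟨f, hf, hf0, hf_int, E, hE, hcE, hE_avg⟩ :=
    exists_integrable_one_lt_avg_of_lt_deltaK fun j => (hK (j + K) (K.le_add_left j)).1
  set bad := {x | 1 ≤ f x} ∪ Fmᶜ
  have h_bad : haarTω bad < c := calc
    haarTω bad ≤ haarTω {x | 1 ≤ f x} + haarTω Fmᶜ := measure_union_le _ _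
    _ ≤ ENNReal.ofReal (∫ x, f x ∂haarTω) := by
        simpa [hFm_null] using
          ofReal_mul_measure_le_ofReal_integral (ae_of_all _ hf0) hf zero_le_one
    _ < c := (ENNReal.ofReal_lt_iff_lt_toReal (integral_nonneg hf0) hcδ.ne_top).2 <| by
        linarith [(hK K le_rfl).2]
  refine ⟨f, hf, limsup E atTop \ bad, (tsub_pos_of_lt (h_bad.trans_le
    (le_measure_limsup_atTop hE fun j => (hcE j).le))).trans_le le_measure_sdiff, ?_⟩
  rintro g ⟨hg_limsup, hg_bad⟩
  simp only [bad, mem_union, mem_ofPred_eq, mem_compl_iff, not_or, not_le, not_not] at hg_bad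
  obtain ⟨S, hS, hS_avg⟩ := exists_contractsTo_of_forall_measureReal_lt (hFm g hg_bad.2) <|
    exists_mem_measureReal_lt_of_frequently (hgeom.comp (tendsto_add_atTop_nat K))
      (mem_limsup_iff_frequently_mem.1 hg_limsup) (hE_avg · g)
  refine ⟨S, hS, fun h_lim => ?_⟩
  obtain ⟨n, hn⟩ := (h_lim.eventually (gt_mem_nhds hg_bad.1)).exists
  exact (hS_avg n).not_gt hn

/-- Theorem 4.3, second part: If `B` satisfies condition (M) and
`δ_k^B → δ₀ > 0`, then `B` does not differentiate `L¹(𝕋^ω)`: there exist `f ∈ L¹` and a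
set of strictly positive measure of points `g` each admitting a contracting sequence
along which the averages of `f` fail to converge to `f g`. -/
theorem not_differentiatesL1_of_deltaK_tendsto_pos (bas : Tω → Set (Set Tω))
    (hbas : IsGeneralBasis bas) (hM : CondM bas) (δ₀ : ℝ≥0∞) (hδ₀ : 0 < δ₀)
    (h : Tendsto (deltaK bas) atTop (𝓝 δ₀)) :
    ∃ f : Tω → ℝ, Integrable f haarTω ∧ ∃ E : Set Tω, 0 < haarTω E ∧
      ∀ g ∈ E, ∃ S : ℕ → Set Tω, ContractsTo bas S g ∧
        ¬ Tendsto (fun n => avg f (S n)) atTop (𝓝 (f g)) :=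
  not_differentiatesL1_of_deltaK_tendsto_pos_general bas hM δ₀ hδ₀ h
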